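/- Let x₁, …, x_m be pairwise distinct unit vectors in ℝ^d with strictly positive first coordinate, d ≥ 2. Then there exists w ∈ ℝ^d such that w · x_m > 0 and w · x_i < 0 for all 1 ≤ i ≤ m − 1, provided x_m is chosen so that x_m · e₁ = min_i (x_i · e₁). -/

import Mathlib

/-!
Write `a = x_m ⋅ e₁ > 0`. The vector `w₀ = a x_m − e₁` is orthogonal to `x_m`, while for `i ≠ m`
we have `w₀ ⋅ x_i = a (x_m ⋅ x_i) − x_i ⋅ e₁ < a − x_i ⋅ e₁ ≤ 0`, because distinct unit vectors
have inner product `< 1` and `x_m` minimizes the first coordinate. Tilting `w₀` slightly towards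
`x_m` makes `w ⋅ x_m` positive and keeps the finitely many strict inequalities `w ⋅ x_i < 0`.
-/

open Filter Topology

section InnerProductSpace

variable {E : Type*} [NormedAddCommGroup E] [InnerProductSpace ℝ E]

theorem exists_inner_pos_forall_inner_neg {ι : Type*} [Finite ι] {v w₀ : E} (hv : v ≠ 0)
    (hw₀v : 0 ≤ inner ℝ w₀ v) {x : ι → E} (hw₀x : ∀ i, inner ℝ w₀ (x i) < 0) :
    ∃ w : E, 0 < inner ℝ w v ∧ ∀ i, inner ℝ w (x i) < 0 := by
  have hnear : ∀ᶠ ε in 𝓝 (0 : ℝ), ∀ i, inner ℝ (w₀ + ε • v) (x i) < 0 := by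
    refine eventually_all.2 fun i => Tendsto.eventually_lt_const (hw₀x i) ?_
    have hcont : Continuous fun ε : ℝ => inner ℝ (w₀ + ε • v) (x i) := by fun_prop
    simpa using hcont.tendsto 0
  obtain ⟨ε, hεx, hεpos⟩ :=
    ((hnear.filter_mono nhdsWithin_le_nhds).and
      (self_mem_nhdsWithin : ∀ᶠ ε in 𝓝[>] (0 : ℝ), 0 < ε)).exists
  refine ⟨w₀ + ε • v, ?_, hεx⟩
  rw [inner_add_left, real_inner_smul_left]
  exact add_pos_of_nonneg_of_pos hw₀v (mul_pos hεpos (real_inner_self_pos.2 hv))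

variable {e z : E}

theorem real_inner_inner_smul_sub_self_of_norm_eq_one (hz : ‖z‖ = 1) :
    inner ℝ (inner ℝ e z • z - e) z = 0 := by
  rw [inner_sub_left, real_inner_smul_left, real_inner_self_eq_norm_sq, hz]
  ring

theorem real_inner_inner_smul_sub_neg_of_le {y : E} (hz : ‖z‖ = 1) (hy : ‖y‖ = 1) (hyz : y ≠ z)
    (hez : 0 < inner ℝ e z) (hle : inner ℝ e z ≤ inner ℝ e y) :
    inner ℝ (inner ℝ e z • z - e) y < 0 := by
  have hzy : inner ℝ z y < 1 := (inner_lt_one_iff_real_of_norm_eq_one hz hy).2 hyz.symm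
  have hlt : inner ℝ e z * inner ℝ z y < inner ℝ e y :=
    calc inner ℝ e z * inner ℝ z y < inner ℝ e z * 1 := mul_lt_mul_of_pos_left hzy hez
      _ ≤ inner ℝ e y := by rwa [mul_one]
  rw [inner_sub_left, real_inner_smul_left]
  exact sub_neg.2 hlt

end InnerProductSpace

theorem EuclideanSpace.real_inner_single_one_left {d : ℕ} (k : Fin d)
    (v : EuclideanSpace ℝ (Fin d)) :
    inner ℝ (EuclideanSpace.single k (1 : ℝ)) v = v k := by
  simp [EuclideanSpace.inner_single_left]

/-- separating-direction construction. Given pairwise distinct unit vectors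
`x₀, …, x_m` in `ℝ^d` (`d ≥ 2`) with strictly positive first coordinate, if the last one
minimizes the first coordinate (`x_m ⋅ e₁ = min_i (x_i ⋅ e₁)`), then there is a direction
`w` with `w ⋅ x_m > 0` and `w ⋅ x_i < 0` for all the other points. -/
theorem exists_separating_direction {d m : ℕ} (hd : 2 ≤ d)
    (x : Fin (m + 1) → EuclideanSpace ℝ (Fin d))
    (hdist : Function.Injective x)
    (hnorm : ∀ i, ‖x i‖ = 1)
    (hpos : ∀ i, 0 < x i ⟨0, by omega⟩)
    (hmin : ∀ i, x (Fin.last m) ⟨0, by omega⟩ ≤ x i ⟨0, by omega⟩) :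
    ∃ w : EuclideanSpace ℝ (Fin d),
      0 < (inner ℝ w (x (Fin.last m)) : ℝ) ∧
      ∀ i : Fin (m + 1), i ≠ Fin.last m → (inner ℝ w (x i) : ℝ) < 0 := by
  set e : EuclideanSpace ℝ (Fin d) := EuclideanSpace.single ⟨0, by omega⟩ 1
  set z := x (Fin.last m)
  have he : ∀ y, inner ℝ e y = y ⟨0, by omega⟩ := EuclideanSpace.real_inner_single_one_left _
  have hw₀x (i : {i // i ≠ Fin.last m}) : inner ℝ (inner ℝ e z • z - e) (x i) < 0 :=
    real_inner_inner_smul_sub_neg_of_le (hnorm _) (hnorm i) (hdist.ne i.2)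
      (by rw [he]; exact hpos _) (by rw [he, he]; exact hmin i)
  obtain ⟨w, hwz, hwx⟩ := exists_inner_pos_forall_inner_neg (norm_ne_zero_iff.1 (by simp [hnorm]))
    (real_inner_inner_smul_sub_self_of_norm_eq_one (hnorm _)).ge hw₀x
  exact ⟨w, hwz, fun i hi => hwx ⟨i, hi⟩⟩
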